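/- arXiv:1109.3809 — 2 statements merged into one kernel-verified Lean document; each statement's English description precedes it below -/
import Mathlib

section
/- Fix m ≥ 2, N ≥ 1 and ζ_1, …, ζ_{m−1} ∈ P_N^−. Let (v_{1j}, …, v_{mj}), j = 1, …, m, be any m solutions of the system (S), and let V(z) be the m×m Laurent polynomial matrix whose j-th column is the associated vector function (v_{1j}(z), …, v_{m−1,j}(z), ṽ_{mj}(z))^T. Then det V(z) is constant, i.e. it takes the same value at every z ∈ ℂ \ {0}. -/
open Matrix Polynomial BigOperators

/-- Evaluation at `z` of the adjoint `p̃(z) = ∑ conj(c_k) z^{-k}` of a polynomial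
`p(z) = ∑ c_k z^k`. -/
noncomputable def adjEval (p : Polynomial ℂ) (z : ℂ) : ℂ :=
  (p.map (starRingEnd ℂ)).eval z⁻¹

/-- A (Laurent-polynomial) function of `z ∈ ℂ \ {0}` belongs to `P⁺`, i.e. it has no
negative-power terms: it agrees with a genuine polynomial away from `0`. -/
def InPPlus (f : ℂ → ℂ) : Prop :=
  ∃ p : Polynomial ℂ, ∀ z : ℂ, z ≠ 0 → f z = p.eval z

/-- The vector function `u(z) = (x_1(z), …, x_{m-1}(z), x̃_m(z))ᵀ` associated with a tuple
`(x_1, …, x_m)`, `m = n + 1`. -/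
noncomputable def vecFun (n : ℕ) (x : Fin (n + 1) → Polynomial ℂ) (z : ℂ) :
    Fin (n + 1) → ℂ :=
  fun j => if j = Fin.last n then adjEval (x j) z else (x j).eval z

/-- `(x_1, …, x_m)`, `m = n + 1`, is a solution of the system (S) determined by
`ζ_1, …, ζ_{m-1} ∈ P_N^-`, where `ζ_i(z) = (ζ i).eval z⁻¹`:
each `x_i ∈ P_N^+`, `ζ_i(z) x_m(z) - x̃_i(z) ∈ P⁺` for `i = 1, …, m-1`, and
`ζ_1(z) x_1(z) + … + ζ_{m-1}(z) x_{m-1}(z) + x̃_m(z) ∈ P⁺`. -/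
def IsSolS (n N : ℕ) (ζ : Fin n → Polynomial ℂ) (x : Fin (n + 1) → Polynomial ℂ) : Prop :=
  (∀ j, (x j).natDegree ≤ N) ∧
  (∀ i : Fin n, InPPlus (fun z =>
    (ζ i).eval z⁻¹ * (x (Fin.last n)).eval z - adjEval (x i.castSucc) z)) ∧
  InPPlus (fun z =>
    (∑ i : Fin n, (ζ i).eval z⁻¹ * (x i.castSucc).eval z) + adjEval (x (Fin.last n)) z)

section Helpers

variable {n : ℕ} {R : Type*} [CommRing R]

/-- add to the last row a combination of the rows (coefficient of last row itself is 0) -/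
lemma det_lastRow_add (A : Matrix (Fin (n+1)) (Fin (n+1)) R) (c : Fin (n+1) → R)
    (hc : c (Fin.last n) = 0) :
    (Matrix.of fun i j => A i j + (if i = Fin.last n then ∑ k, c k * A k j else 0)).det
      = A.det := by
  set F : Matrix (Fin (n+1)) (Fin (n+1)) R :=
    Matrix.of fun i j => (if i = j then 1 else 0) + (if i = Fin.last n then c j else 0) with hF
  have hFA : F * A = Matrix.of fun i j => A i j + (if i = Fin.last n then ∑ k, c k * A k j else 0) := by
    ext i j
    simp only [Matrix.mul_apply, hF, Matrix.of_apply, add_mul, Finset.sum_add_distrib,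
      ite_mul, one_mul, zero_mul]
    rw [Finset.sum_ite_eq (Finset.univ) i (fun k => A k j)]
    simp only [Finset.mem_univ, if_true]
    congr 1
    by_cases hi : i = Fin.last n <;> simp [hi, Finset.mul_sum]
  have hFtri : F.BlockTriangular OrderDual.toDual := by
    intro i j hij
    have hij' : (i : Fin (n+1)) < j := hij
    have h1 : i ≠ j := ne_of_lt hij'
    have h2 : ¬ (i = Fin.last n) := by
      intro h
      subst h
      exact absurd (Fin.le_last j) (not_le_of_gt hij')
    simp [hF, h1, h2]
  have hdetF : F.det = 1 := by
    rw [Matrix.det_of_lowerTriangular F hFtri]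
    apply Finset.prod_eq_one
    intro i _
    by_cases hi : i = Fin.last n <;> simp [hF, hi, hc]
  rw [← hFA, Matrix.det_mul, hdetF, one_mul]

/-- add to each row a multiple of the last row (multiple for the last row itself is 0) -/
lemma det_rows_add_last (A : Matrix (Fin (n+1)) (Fin (n+1)) R) (d : Fin (n+1) → R)
    (hd : d (Fin.last n) = 0) :
    (Matrix.of fun i j => A i j + d i * A (Fin.last n) j).det = A.det := by
  set E : Matrix (Fin (n+1)) (Fin (n+1)) R :=
    Matrix.of fun i j => (if i = j then 1 else 0) + (if j = Fin.last n then d i else 0) with hE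
  have hEA : E * A = Matrix.of fun i j => A i j + d i * A (Fin.last n) j := by
    ext i j
    simp only [Matrix.mul_apply, hE, Matrix.of_apply, add_mul, Finset.sum_add_distrib,
      ite_mul, one_mul, zero_mul]
    rw [Finset.sum_ite_eq (Finset.univ) i (fun k => A k j),
      Finset.sum_ite_eq' (Finset.univ) (Fin.last n) (fun k => d i * A k j)]
    simp
  have hEtri : E.BlockTriangular id := by
    intro i j hij
    have hij' : (j : Fin (n+1)) < i := hij
    have h1 : i ≠ j := (ne_of_lt hij').symm
    have h2 : ¬ (j = Fin.last n) := by
      intro h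
      subst h
      exact absurd (Fin.le_last i) (not_le_of_gt hij')
    simp [hE, h1, h2]
  have hdetE : E.det = 1 := by
    rw [Matrix.det_of_upperTriangular hEtri]
    apply Finset.prod_eq_one
    intro i _
    by_cases hi : i = Fin.last n <;> simp [hE, hi, hd]
  rw [← hEA, Matrix.det_mul, hdetE, one_mul]

end Helpers

lemma poly_const_of_eval_inv (P Q : Polynomial ℂ)
    (h : ∀ z : ℂ, z ≠ 0 → P.eval z = Q.eval z⁻¹) :
    ∀ z w : ℂ, z ≠ 0 → w ≠ 0 → P.eval z = P.eval w := by
  set M := Q.natDegree with hM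
  have key : ∀ z : ℂ, z ≠ 0 → (X ^ M * P).eval z = (Q.reflect M).eval z := by
    intro z hz
    have hz' : (z : ℂ)⁻¹ ≠ 0 := inv_ne_zero hz
    letI : Invertible (z⁻¹ : ℂ) := invertibleOfNonzero hz'
    have := Polynomial.eval₂_reflect_mul_pow (RingHom.id ℂ) (z⁻¹) M Q le_rfl
    rw [invOf_eq_inv, inv_inv] at this
    rw [eval₂_eq_eval_map, Polynomial.map_id, eval₂_eq_eval_map, Polynomial.map_id] at this
    rw [eval_mul, eval_pow, eval_X, h z hz, ← this]
    have hinv : (z⁻¹ : ℂ) ^ M * z ^ M = 1 := by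
      rw [← mul_pow, inv_mul_cancel₀ hz, one_pow]
    linear_combination (Polynomial.eval z (Q.reflect M)) * hinv
  have heq : X ^ M * P = Q.reflect M := by
    apply Polynomial.eq_of_infinite_eval_eq
    apply Set.Infinite.mono (s := {(0 : ℂ)}ᶜ)
    · intro z hz
      exact key z hz
    · exact Set.Finite.infinite_compl (Set.finite_singleton 0)
  have hrefl : (Q.reflect M).natDegree ≤ M := by
    rw [Polynomial.natDegree_le_iff_coeff_eq_zero]
    intro N hN
    rw [Polynomial.coeff_reflect, Polynomial.revAt_eq_self_of_lt hN]
    exact Polynomial.coeff_eq_zero_of_natDegree_lt hN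
  rcases eq_or_ne P 0 with hP | hP
  · intro z w _ _; simp [hP]
  · have hdeg : (X ^ M * P).natDegree = M + P.natDegree := by
      rw [Polynomial.natDegree_mul (pow_ne_zero _ Polynomial.X_ne_zero) hP,
        Polynomial.natDegree_X_pow]
    have : M + P.natDegree ≤ M := by rw [← hdeg, heq]; exact hrefl
    have hP0 : P.natDegree = 0 := by omega
    intro z w _ _
    rw [Polynomial.eq_C_of_natDegree_eq_zero hP0]
    simp

-- conjugation of a polynomial evaluation
lemma conj_eval (p : Polynomial ℂ) (a : ℂ) :
    (starRingEnd ℂ) (p.eval a) = (p.map (starRingEnd ℂ)).eval ((starRingEnd ℂ) a) := by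
  rw [Polynomial.eval_map, Polynomial.eval₂_hom]

lemma map_conj_conj (p : Polynomial ℂ) :
    (p.map (starRingEnd ℂ)).map (starRingEnd ℂ) = p := by
  rw [Polynomial.map_map]
  convert Polynomial.map_id
  ext z
  simp

theorem stmt_10 {n N : ℕ} (hn : 1 ≤ n) (hN : 1 ≤ N)
    (ζ : Fin n → Polynomial ℂ)
    (hζ : ∀ i, (ζ i).natDegree ≤ N ∧ (ζ i).coeff 0 = 0)
    (x : Fin (n + 1) → Fin (n + 1) → Polynomial ℂ)
    (hx : ∀ j, IsSolS n N ζ (x j)) :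
    ∀ z w : ℂ, z ≠ 0 → w ≠ 0 →
      (Matrix.of fun i j => vecFun n (x j) z i).det =
        (Matrix.of fun i j => vecFun n (x j) w i).det := by
  classical
  choose f hf using fun j i => (hx j).2.1 i
  choose g hg using fun j => (hx j).2.2
  -- the polynomial matrices
  set MP : Matrix (Fin (n+1)) (Fin (n+1)) (Polynomial ℂ) :=
    Matrix.of fun i j => if i = Fin.last n then g j else x j i with hMP
  set MQ : Matrix (Fin (n+1)) (Fin (n+1)) (Polynomial ℂ) :=
    Matrix.of fun i j => if h : i = Fin.last n then x j (Fin.last n)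
      else -(f j (i.castPred h)) with hMQ
  set P : Polynomial ℂ := MP.det with hP
  set Q : Polynomial ℂ := MQ.det with hQdef
  -- Step 1: det V(z) = P.eval z
  have step1 : ∀ z : ℂ, z ≠ 0 →
      (Matrix.of fun i j => vecFun n (x j) z i).det = P.eval z := by
    intro z hz
    set V : Matrix (Fin (n+1)) (Fin (n+1)) ℂ :=
      Matrix.of fun i j => vecFun n (x j) z i with hV
    set c : Fin (n+1) → ℂ := Fin.snoc (fun k : Fin n => (ζ k).eval z⁻¹) 0 with hc
    have hrow := det_lastRow_add V c (by simp [hc])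
    have hmap : (Matrix.of fun i j => V i j +
        (if i = Fin.last n then ∑ k, c k * V k j
          else 0)) = MP.map (Polynomial.evalRingHom z) := by
      ext i j
      by_cases hi : i = Fin.last n
      · subst hi
        simp only [Matrix.of_apply, if_pos rfl, hMP, Matrix.map_apply, Polynomial.coe_evalRingHom]
        rw [Fin.sum_univ_castSucc]
        simp only [hc, Fin.snoc_castSucc, Fin.snoc_last, zero_mul, add_zero]
        have hlast : V (Fin.last n) j = adjEval (x j (Fin.last n)) z := by
          simp [hV, vecFun]
        have hcs : ∀ k : Fin n, V k.castSucc j = (x j k.castSucc).eval z := by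
          intro k
          simp [hV, vecFun, (Fin.castSucc_lt_last k).ne]
        have hgz := hg j z hz
        simp only [] at hgz
        rw [hlast]
        simp_rw [hcs]
        rw [add_comm]
        exact hgz
      · simp only [Matrix.of_apply, if_neg hi, hMP, Matrix.map_apply,
          Polynomial.coe_evalRingHom, add_zero]
        simp [hV, vecFun, hi]
    rw [hV] at hrow
    rw [← hrow, hmap, hP,
      show Polynomial.eval z MP.det = (Polynomial.evalRingHom z) MP.det from rfl,
      RingHom.map_det, RingHom.mapMatrix_apply]
  -- Step 2: det U(w) = Q.eval w
  have step2 : ∀ w : ℂ, w ≠ 0 →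
      (Matrix.of fun i j : Fin (n+1) => if i = Fin.last n then (x j (Fin.last n)).eval w
        else adjEval (x j i) w).det = Q.eval w := by
    intro w hw
    set U : Matrix (Fin (n+1)) (Fin (n+1)) ℂ :=
      Matrix.of fun i j => if i = Fin.last n then (x j (Fin.last n)).eval w
        else adjEval (x j i) w with hU
    have hrow := det_rows_add_last U
      (fun i => if h : i = Fin.last n then 0 else -((ζ (i.castPred h)).eval w⁻¹))
      (by simp)
    have hmap : (Matrix.of fun i j => U i j +
        (if h : i = Fin.last n then 0 else -((ζ (i.castPred h)).eval w⁻¹)) * U (Fin.last n) j)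
        = MQ.map (Polynomial.evalRingHom w) := by
      ext i j
      by_cases hi : i = Fin.last n
      · subst hi
        simp [hU, hMQ]
      · have hfw := hf j (i.castPred hi) w hw
        simp only [Fin.castSucc_castPred] at hfw
        simp only [Matrix.of_apply, dif_neg hi, hMQ, Matrix.map_apply,
          Polynomial.coe_evalRingHom, hU, if_neg hi, Polynomial.eval_neg]
        simp only [if_true]
        linear_combination -hfw
    rw [hU] at hrow
    rw [← hrow, hmap, hQdef,
      show Polynomial.eval w MQ.det = (Polynomial.evalRingHom w) MQ.det from rfl,
      RingHom.map_det, RingHom.mapMatrix_apply]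
  -- Step 3: P.eval z = (Q.map conj).eval z⁻¹
  have step3 : ∀ z : ℂ, z ≠ 0 →
      P.eval z = (Q.map (starRingEnd ℂ)).eval z⁻¹ := by
    intro z hz
    set w : ℂ := ((starRingEnd ℂ) z)⁻¹ with hwdef
    have hw : w ≠ 0 := by
      simp [hwdef, hz]
    have hconj : (starRingEnd ℂ) ((Matrix.of fun i j => vecFun n (x j) z i).det)
        = (Matrix.of fun i j : Fin (n+1) => if i = Fin.last n then (x j (Fin.last n)).eval w
            else adjEval (x j i) w).det := by
      rw [RingHom.map_det, RingHom.mapMatrix_apply]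
      congr 1
      ext i j
      simp only [Matrix.map_apply, Matrix.of_apply, vecFun, adjEval]
      by_cases hi : i = Fin.last n
      · subst hi
        simp only [if_true]
        rw [conj_eval, map_conj_conj, map_inv₀]
      · simp only [if_neg hi]
        rw [conj_eval]
        congr 1
        rw [hwdef, inv_inv]
    have h1 : (starRingEnd ℂ) (P.eval z) = Q.eval w := by
      rw [← step1 z hz, hconj, step2 w hw]
    have h2 : P.eval z = (starRingEnd ℂ) (Q.eval w) := by
      rw [← h1, Complex.conj_conj]
    rw [h2, conj_eval, hwdef, map_inv₀, Complex.conj_conj]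
  have hconst := poly_const_of_eval_inv P (Q.map (starRingEnd ℂ)) step3
  intro z w hz hw
  rw [step1 z hz, step1 w hw]
  exact hconst z w hz hw
end

section
/- Let m ≥ 2, N ≥ 1, and let A(z) = Σ_{k=0}^N A_k z^k be an m×m complex matrix polynomial. Then A(z) is a wavelet matrix of rank m, order N and degree N satisfying A(1) = I_m whose coefficient A_N has a nonzero last row, if and only if the matrix function U(z) := diag(1, …, 1, z^{−N})·A(z) (i.e. A(z) with its last row multiplied by z^{−N}) belongs to PU_1(m,N). -/
open Matrix BigOperators

/-- Evaluation of the matrix polynomial `A(z) = ∑_{k=0}^N A_k z^k`. -/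
noncomputable def mpEval {m : ℕ} (N : ℕ) (A : ℕ → Matrix (Fin m) (Fin m) ℂ) (z : ℂ) :
    Matrix (Fin m) (Fin m) ℂ :=
  ∑ k ∈ Finset.range (N + 1), z ^ k • A k

/-- Evaluation of the adjoint `Ã(z) = ∑_{k=0}^N A_k^* z^{-k}`. -/
noncomputable def mpAdjEval {m : ℕ} (N : ℕ) (A : ℕ → Matrix (Fin m) (Fin m) ℂ) (z : ℂ) :
    Matrix (Fin m) (Fin m) ℂ :=
  ∑ k ∈ Finset.range (N + 1), (z⁻¹) ^ k • (A k)ᴴ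

/-- `A(z)` is paraunitary: `A(z) Ã(z) = I` for every `z ∈ ℂ \ {0}`. -/
def IsParaunitary {m : ℕ} (N : ℕ) (A : ℕ → Matrix (Fin m) (Fin m) ℂ) : Prop :=
  ∀ z : ℂ, z ≠ 0 → mpEval N A z * mpAdjEval N A z = 1

/-- Evaluation at `z` of the `m × m` (`m = n + 1`) matrix function `U(z)` whose first `m - 1`
rows have the polynomial entries `u i j` and whose last row has the entries `ũ_{mj}(z)`. -/
noncomputable def Ueval (n : ℕ) (u : Fin (n + 1) → Fin (n + 1) → Polynomial ℂ) (z : ℂ) :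
    Matrix (Fin (n + 1)) (Fin (n + 1)) ℂ :=
  Matrix.of fun i j => if i = Fin.last n then adjEval (u i j) z else (u i j).eval z

/-- Evaluation at `z` of the adjoint `Ũ(z)` of the matrix function `U(z)` above. -/
noncomputable def UadjEval (n : ℕ) (u : Fin (n + 1) → Fin (n + 1) → Polynomial ℂ) (z : ℂ) :
    Matrix (Fin (n + 1)) (Fin (n + 1)) ℂ :=
  Matrix.of fun i j => if j = Fin.last n then (u j i).eval z else adjEval (u j i) z

/-- `U(z)` (encoded by the polynomials `u i j ∈ P_N^+`) belongs to the class `PU_1(m, N)`,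
`m = n + 1`: the first `m - 1` rows of `U(z)` are `(u i j)(z)`, the last row is `ũ_{mj}(z)`,
`Ũ(z)U(z) = I`, `det U(z) = 1`, `U(1) = I`, and `u_{mj}(0) ≠ 0` for at least one `j`. -/
def IsPU1 (n N : ℕ) (u : Fin (n + 1) → Fin (n + 1) → Polynomial ℂ) : Prop :=
  (∀ i j, (u i j).natDegree ≤ N) ∧
  (∀ z : ℂ, z ≠ 0 → UadjEval n u z * Ueval n u z = 1) ∧
  (∀ z : ℂ, z ≠ 0 → (Ueval n u z).det = 1) ∧
  Ueval n u 1 = 1 ∧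
  ∃ j, (u (Fin.last n) j).coeff 0 ≠ 0

/-- Evaluation at `z` of the `m × m` (`m = n + 1`) matrix `F(z)` which is the identity matrix
except that its last row is `(ζ_1(z), …, ζ_{m-1}(z), 1)`, where `ζ_i(z) = (ζ i).eval z⁻¹`. -/
noncomputable def Feval (n : ℕ) (ζ : Fin n → Polynomial ℂ) (z : ℂ) :
    Matrix (Fin (n + 1)) (Fin (n + 1)) ℂ :=
  Matrix.of fun i j =>
    Fin.lastCases
      (Fin.lastCases (1 : ℂ) (fun j' => (ζ j').eval z⁻¹) j)
      (fun i' => if i'.castSucc = j then (1 : ℂ) else 0) i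

noncomputable def polyOf (N : ℕ) (c : ℕ → ℂ) : Polynomial ℂ :=
  ∑ k ∈ Finset.range (N + 1), Polynomial.C (c k) * Polynomial.X ^ k

lemma polyOf_natDegree_le (N : ℕ) (c : ℕ → ℂ) : (polyOf N c).natDegree ≤ N :=
  Polynomial.natDegree_sum_le_of_forall_le _ _ fun k hk =>
    le_trans (Polynomial.natDegree_C_mul_X_pow_le _ _) (Nat.lt_succ_iff.mp (Finset.mem_range.mp hk))

lemma polyOf_eval (N : ℕ) (c : ℕ → ℂ) (z : ℂ) :
    (polyOf N c).eval z = ∑ k ∈ Finset.range (N + 1), c k * z ^ k := by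
  simp [polyOf, Polynomial.eval_finset_sum]

lemma polyOf_coeff (N : ℕ) (c : ℕ → ℂ) {t : ℕ} (h : t ≤ N) : (polyOf N c).coeff t = c t := by
  simp [polyOf, Polynomial.finset_sum_coeff, Polynomial.coeff_C_mul, Polynomial.coeff_X_pow,
    Finset.sum_ite_eq, Nat.lt_succ_iff, h]

lemma adjEval_polyOf (N : ℕ) (c : ℕ → ℂ) (z : ℂ) :
    adjEval (polyOf N c) z = ∑ k ∈ Finset.range (N + 1), (starRingEnd ℂ) (c k) * (z⁻¹) ^ k := by
  simp [adjEval, polyOf, Polynomial.map_sum, Polynomial.map_mul, Polynomial.map_pow,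
    Polynomial.map_C, Polynomial.map_X, Polynomial.eval_finset_sum]

lemma adjEval_eq_sum (p : Polynomial ℂ) (N : ℕ) (h : p.natDegree ≤ N) (z : ℂ) :
    adjEval p z = ∑ t ∈ Finset.range (N + 1), (starRingEnd ℂ) (p.coeff t) * (z⁻¹) ^ t := by
  rw [adjEval, Polynomial.eval_eq_sum_range'
    (lt_of_le_of_lt (le_trans Polynomial.natDegree_map_le h) (Nat.lt_succ_self N))]
  simp [Polynomial.coeff_map]

lemma mpEval_apply {m : ℕ} (N : ℕ) (A : ℕ → Matrix (Fin m) (Fin m) ℂ) (z : ℂ) (i j : Fin m) :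
    mpEval N A z i j = ∑ k ∈ Finset.range (N + 1), z ^ k * A k i j := by
  simp [mpEval, Matrix.sum_apply]

lemma poly_ext {P Q : Polynomial ℂ} (h : ∀ z : ℂ, z ≠ 0 → P.eval z = Q.eval z) : P = Q := by
  have hinf : ({(0:ℂ)}ᶜ : Set ℂ).Infinite := (Set.finite_singleton 0).infinite_compl
  have h2 : P - Q = 0 := by
    apply Polynomial.eq_zero_of_infinite_isRoot
    apply hinf.mono
    intro z hz
    simp only [Set.mem_compl_iff, Set.mem_singleton_iff] at hz
    simp [Polynomial.IsRoot, h z hz]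
  exact sub_eq_zero.mp h2

lemma powh (z : ℂ) (hz : z ≠ 0) {s N : ℕ} (h : s ≤ N) : (z⁻¹)^(N-s) = (z⁻¹)^N * z^s := by
  rw [pow_sub₀ _ (inv_ne_zero hz) h, inv_pow, inv_pow, inv_inv]

lemma powh' (z : ℂ) (hz : z ≠ 0) {s N : ℕ} (h : s ≤ N) : z^(N-s) = z^N * (z⁻¹)^s := by
  simpa using powh z⁻¹ (inv_ne_zero hz) h

lemma extract (p : Polynomial ℂ) {N : ℕ} (hd : p.natDegree ≤ N) (a : ℕ → ℂ)
    (h : ∀ z : ℂ, z ≠ 0 → adjEval p z = (z⁻¹)^N * ∑ k ∈ Finset.range (N+1), z^k * a k) :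
    a N = (starRingEnd ℂ) (p.coeff 0) := by
  have hPQ : polyOf N a = polyOf N (fun t => (starRingEnd ℂ) (p.coeff (N - t))) := by
    apply poly_ext
    intro z hz
    rw [polyOf_eval, polyOf_eval]
    have step1 : ∑ t ∈ Finset.range (N+1), (starRingEnd ℂ) (p.coeff (N - t)) * z ^ t
        = ∑ t ∈ Finset.range (N+1), (starRingEnd ℂ) (p.coeff t) * z ^ (N - t) := by
      rw [← Finset.sum_range_reflect (fun j => (starRingEnd ℂ) (p.coeff j) * z ^ (N - j)) (N+1)]
      apply Finset.sum_congr rfl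
      intro t ht
      have ht' : t ≤ N := Nat.lt_succ_iff.mp (Finset.mem_range.mp ht)
      rw [Nat.add_sub_cancel, Nat.sub_sub_self ht']
    rw [step1]
    have step2 : ∑ t ∈ Finset.range (N+1), (starRingEnd ℂ) (p.coeff t) * z ^ (N - t)
        = z^N * adjEval p z := by
      rw [adjEval_eq_sum p N hd, Finset.mul_sum]
      apply Finset.sum_congr rfl
      intro t ht
      rw [powh' z hz (Nat.lt_succ_iff.mp (Finset.mem_range.mp ht))]
      ring
    rw [step2, h z hz, ← mul_assoc, ← mul_pow, mul_inv_cancel₀ hz, one_pow, one_mul]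
    apply Finset.sum_congr rfl
    intro t _
    ring
  have := congrArg (fun q => Polynomial.coeff q N) hPQ
  simpa [polyOf_coeff _ _ (le_refl N)] using this

lemma mpAdjEval_eq {m : ℕ} (N : ℕ) (A : ℕ → Matrix (Fin m) (Fin m) ℂ) (z : ℂ) :
    mpAdjEval N A z = (mpEval N A ((starRingEnd ℂ) z)⁻¹)ᴴ := by
  ext i j
  simp [mpEval, mpAdjEval, Matrix.sum_apply, Matrix.conjTranspose_apply, map_sum, _root_.map_mul,
    map_pow, map_inv₀]

lemma conj_adjEval (p : Polynomial ℂ) (z : ℂ) :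
    (starRingEnd ℂ) (adjEval p ((starRingEnd ℂ) z)⁻¹) = p.eval z := by
  rw [adjEval, inv_inv, Polynomial.eval_map, Polynomial.eval₂_at_apply]
  simp

lemma conj_eval_s19 (p : Polynomial ℂ) (z : ℂ) :
    (starRingEnd ℂ) (p.eval ((starRingEnd ℂ) z)⁻¹) = adjEval p z := by
  conv_lhs => rw [show p = (p.map (starRingEnd ℂ)).map (starRingEnd ℂ) by
    rw [Polynomial.map_map]; simp]
  rw [← map_inv₀, Polynomial.eval_map, Polynomial.eval₂_at_apply, adjEval]
  simp

lemma UadjEval_eq (n : ℕ) (u : Fin (n + 1) → Fin (n + 1) → Polynomial ℂ) (z : ℂ) :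
    UadjEval n u z = (Ueval n u ((starRingEnd ℂ) z)⁻¹)ᴴ := by
  ext i j
  simp only [UadjEval, Ueval, Matrix.conjTranspose_apply, Matrix.of_apply]
  by_cases hj : j = Fin.last n
  · simp [hj, conj_adjEval]
  · simp [hj, conj_eval_s19]

lemma diag_mul_diag_one {n N : ℕ} (z : ℂ) (hz : z ≠ 0) :
    (Matrix.diagonal (fun i : Fin (n+1) => if i = Fin.last n then (z : ℂ) ^ N else 1)) *
      (Matrix.diagonal (fun i : Fin (n+1) => if i = Fin.last n then (z⁻¹) ^ N else 1)) = 1 := by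
  rw [Matrix.diagonal_mul_diagonal]
  have h : (fun i : Fin (n+1) => (if i = Fin.last n then (z:ℂ)^N else 1) *
      (if i = Fin.last n then (z⁻¹)^N else 1)) = fun _ => (1:ℂ) := by
    funext i
    by_cases hi : i = Fin.last n <;> simp [hi, mul_inv_cancel₀ (pow_ne_zero N hz)]
  rw [h, Matrix.diagonal_one]

lemma det_diag_last {n N : ℕ} (w : ℂ) :
    (Matrix.diagonal (fun i : Fin (n+1) => if i = Fin.last n then (w : ℂ) ^ N else 1)).det
      = w ^ N := by
  rw [Matrix.det_diagonal]
  simp [Finset.prod_ite_eq']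

theorem stmt_19 {n N : ℕ} (hn : 1 ≤ n) (hN : 1 ≤ N)
    (A : ℕ → Matrix (Fin (n + 1)) (Fin (n + 1)) ℂ) :
    (IsParaunitary N A ∧
        A N ≠ 0 ∧
        (∃ c : ℂ, ∀ z : ℂ, z ≠ 0 → (mpEval N A z).det = c * z ^ N) ∧
        mpEval N A 1 = 1 ∧
        A N (Fin.last n) ≠ 0) ↔
      ∃ u : Fin (n + 1) → Fin (n + 1) → Polynomial ℂ,
        IsPU1 n N u ∧
        ∀ z : ℂ, z ≠ 0 →
          Ueval n u z =
            Matrix.diagonal (fun i => if i = Fin.last n then (z⁻¹) ^ N else 1) *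
              mpEval N A z := by
  constructor
  · rintro ⟨hpara, hAN, ⟨c, hdetc⟩, hA1, hrow⟩
    refine ⟨fun i j =>
      if i = Fin.last n then polyOf N (fun k => (starRingEnd ℂ) (A (N - k) i j))
      else polyOf N (fun k => A k i j), ?_, ?_⟩
    rotate_left
    all_goals {
      have hUeq : ∀ z : ℂ, z ≠ 0 → Ueval n (fun i j =>
          if i = Fin.last n then polyOf N (fun k => (starRingEnd ℂ) (A (N - k) i j))
          else polyOf N (fun k => A k i j)) z =
          Matrix.diagonal (fun i => if i = Fin.last n then (z⁻¹) ^ N else 1) * mpEval N A z := by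
        intro z hz
        ext i j
        rw [Matrix.diagonal_mul]
        simp only [Ueval, Matrix.of_apply]
        by_cases hi : i = Fin.last n
        · rw [if_pos hi, if_pos hi, if_pos hi, adjEval_polyOf, mpEval_apply]
          have refl1 : ∑ k ∈ Finset.range (N+1),
              (starRingEnd ℂ) ((starRingEnd ℂ) (A (N - k) i j)) * (z⁻¹) ^ k
              = ∑ k ∈ Finset.range (N+1), A k i j * (z⁻¹) ^ (N - k) := by
            rw [← Finset.sum_range_reflect (fun k => A k i j * (z⁻¹) ^ (N - k)) (N+1)]
            apply Finset.sum_congr rfl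
            intro k hk
            have hk' : k ≤ N := Nat.lt_succ_iff.mp (Finset.mem_range.mp hk)
            rw [Nat.add_sub_cancel, Nat.sub_sub_self hk', Complex.conj_conj]
          rw [refl1, Finset.mul_sum]
          apply Finset.sum_congr rfl
          intro k hk
          rw [powh z hz (Nat.lt_succ_iff.mp (Finset.mem_range.mp hk))]
          ring
        · rw [if_neg hi, if_neg hi, if_neg hi, polyOf_eval, mpEval_apply, one_mul]
          apply Finset.sum_congr rfl
          intro k _
          ring
      first
      | exact hUeq
      | {
        refine ⟨fun i j => by by_cases hi : i = Fin.last n <;>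
            simp [hi, polyOf_natDegree_le], ?_, ?_, ?_, ?_⟩
        · -- Ũ U = 1
          intro z hz
          have hcz : (starRingEnd ℂ) z ≠ 0 := by simpa using hz
          have hw : ((starRingEnd ℂ) z)⁻¹ ≠ 0 := inv_ne_zero hcz
          rw [UadjEval_eq, hUeq _ hw, hUeq z hz, Matrix.conjTranspose_mul, ← mpAdjEval_eq,
            Matrix.diagonal_conjTranspose]
          have hstar : (star fun i : Fin (n+1) =>
              if i = Fin.last n then ((((starRingEnd ℂ) z)⁻¹)⁻¹) ^ N else 1)
              = fun i : Fin (n+1) => if i = Fin.last n then z ^ N else (1:ℂ) := by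
            funext i
            by_cases hi : i = Fin.last n <;> simp [hi, Pi.star_apply, inv_inv, ← map_pow,
              Complex.conj_conj]
          rw [hstar, mul_assoc, ← mul_assoc (Matrix.diagonal _), diag_mul_diag_one z hz, one_mul]
          exact mul_eq_one_comm.mp (hpara z hz)
        · -- det = 1
          intro z hz
          have hc : c = 1 := by
            have h1 := hdetc 1 one_ne_zero
            rw [hA1] at h1
            simpa using h1.symm
          rw [hUeq z hz, Matrix.det_mul, det_diag_last, hdetc z hz, hc, one_mul, inv_pow,
            inv_mul_cancel₀ (pow_ne_zero N hz)]
        · -- U(1) = 1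
          rw [hUeq 1 one_ne_zero, hA1, mul_one]
          have : (fun i : Fin (n+1) => if i = Fin.last n then ((1:ℂ)⁻¹) ^ N else 1)
              = fun _ => (1:ℂ) := by funext i; by_cases hi : i = Fin.last n <;> simp [hi]
          rw [this, Matrix.diagonal_one]
        · -- coeff condition
          obtain ⟨j, hj⟩ := Function.ne_iff.mp hrow
          refine ⟨j, ?_⟩
          simpa [polyOf_coeff _ _ (Nat.zero_le N)] using hj
      }
    }
  · rintro ⟨u, ⟨hdeg, hUU, hdet, hU1, j0, hj0⟩, hUeq⟩
    have hA : ∀ z : ℂ, z ≠ 0 → mpEval N A z =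
        Matrix.diagonal (fun i : Fin (n+1) => if i = Fin.last n then z ^ N else 1) *
          Ueval n u z := by
      intro z hz
      rw [hUeq z hz, ← mul_assoc, diag_mul_diag_one z hz, one_mul]
    have hrow : A N (Fin.last n) ≠ 0 := by
      have key : A N (Fin.last n) j0 = (starRingEnd ℂ) ((u (Fin.last n) j0).coeff 0) := by
        apply extract (u (Fin.last n) j0) (hdeg _ _) (fun k => A k (Fin.last n) j0)
        intro z hz
        have h1 := congrFun (congrFun (hUeq z hz) (Fin.last n)) j0
        rw [Matrix.diagonal_mul] at h1
        simp only [Ueval, Matrix.of_apply, if_pos rfl, eq_self_iff_true, if_true] at h1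
        rw [h1, mpEval_apply]
      intro h0
      apply hj0
      have : A N (Fin.last n) j0 = 0 := by rw [h0]; rfl
      rw [key] at this
      simpa using this
    have hANne : A N ≠ 0 := by
      intro h0
      apply hrow
      rw [h0]
      rfl
    refine ⟨?_, hANne, ⟨1, ?_⟩, ?_, hrow⟩
    · -- paraunitary
      intro z hz
      have hcz : (starRingEnd ℂ) z ≠ 0 := by simpa using hz
      have hw : ((starRingEnd ℂ) z)⁻¹ ≠ 0 := inv_ne_zero hcz
      rw [hA z hz, mpAdjEval_eq, hA _ hw, Matrix.conjTranspose_mul, ← UadjEval_eq,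
        Matrix.diagonal_conjTranspose]
      have hstar : (star fun i : Fin (n+1) =>
          if i = Fin.last n then (((starRingEnd ℂ) z)⁻¹) ^ N else 1)
          = fun i : Fin (n+1) => if i = Fin.last n then (z⁻¹) ^ N else (1:ℂ) := by
        funext i
        by_cases hi : i = Fin.last n <;> simp [hi, Pi.star_apply, ← map_pow, ← map_inv₀,
          Complex.conj_conj]
      rw [hstar, mul_assoc, ← mul_assoc (Ueval n u z),
        mul_eq_one_comm.mp (hUU z hz), one_mul, diag_mul_diag_one z hz]
    · -- determinant
      intro z hz
      rw [hA z hz, Matrix.det_mul, det_diag_last, hdet z hz, mul_one, one_mul]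
    · -- value at 1
      rw [hA 1 one_ne_zero, hU1, mul_one]
      have : (fun i : Fin (n+1) => if i = Fin.last n then (1:ℂ) ^ N else 1)
          = fun _ => (1:ℂ) := by funext i; by_cases hi : i = Fin.last n <;> simp [hi]
      rw [this, Matrix.diagonal_one]
end
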